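/- Let f be a bi-univalent function of the class S*_σ(φ), i.e. f is bi-univalent with inverse extension F and both zf'(z)/f(z) ≺ φ(z) and wF'(w)/F(w) ≺ φ(w). Then the second Taylor coefficient of f satisfies |a₂| ≤ √((B₁² + B₁ + |B₂ − B₁|)/2). -/

import Mathlib

/-!
Write `p = φ ∘ ω` and `q = φ ∘ τ`, where `ω`, `τ` are the Schwarz functions of the two
subordinations. Near `0` we have `p f = z f'` and, since `F ∘ f = id`, also `p · (q ∘ f) = 1`.
Comparing Taylor coefficients up to order two gives, for `ω = c₁ z + c₂ z² + ⋯` and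
`τ = d₁ z + d₂ z² + ⋯`, the relations `B₁ c₁ = a₂ = -B₁ d₁` and
`B₁ (c₂ + d₂) + B₂ (c₁² + d₁²) = 2 a₂²`; only the second-order data of `F` enter.
Schwarz–Pick applied to `ω(z)/z` gives `|c₂| ≤ 1 - |c₁|²`, and likewise for `τ`, so
`|a₂|² ≤ B₁ (1 - |c₁|²) + |B₂| |c₁|²`, while `|a₂| = B₁ |c₁| ≤ B₁`. Averaging the two bounds
`|a₂|² ≤ B₁ + |B₂ - B₁|` and `|a₂|² ≤ B₁²` gives the claim.
-/

open Metric Set Complex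

noncomputable section

/-- `g` is subordinate to `h` on the unit disk: there is an analytic `ω : 𝔻 → 𝔻`
with `ω 0 = 0` such that `g = h ∘ ω` on `𝔻`. -/
def Subordinate (g h : ℂ → ℂ) : Prop :=
  ∃ ω : ℂ → ℂ, DifferentiableOn ℂ ω (ball 0 1) ∧ ω 0 = 0 ∧
    (∀ z ∈ ball (0 : ℂ) 1, ω z ∈ ball (0 : ℂ) 1) ∧
    ∀ z ∈ ball (0 : ℂ) 1, g z = h (ω z)

open Filter Topology ComplexConjugate

section IteratedDeriv

variable {𝕜 : Type*} [NontriviallyNormedField 𝕜] {u v : 𝕜 → 𝕜} {x : 𝕜}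

theorem iteratedDeriv_two_fun_mul (hu : ContDiffAt 𝕜 2 u x) (hv : ContDiffAt 𝕜 2 v x) :
    iteratedDeriv 2 (fun y => u y * v y) x =
      iteratedDeriv 2 u x * v x + 2 * deriv u x * deriv v x + u x * iteratedDeriv 2 v x := by
  rw [iteratedDeriv_fun_mul hu hv]
  simp only [Nat.reduceAdd, Finset.sum_range_succ, Finset.range_one, Finset.sum_singleton,
    Nat.choose_zero_right, Nat.cast_one, iteratedDeriv_zero, one_mul, tsub_zero,
    Nat.choose_succ_self_right, Nat.cast_ofNat, iteratedDeriv_one, Nat.add_one_sub_one,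
    Nat.choose_self, tsub_self]
  ring

theorem iteratedDeriv_two_comp (hu : ContDiffAt 𝕜 2 u (v x)) (hv : ContDiffAt 𝕜 2 v x) :
    iteratedDeriv 2 (u ∘ v) x =
      iteratedDeriv 2 u (v x) * deriv v x ^ 2 + deriv u (v x) * iteratedDeriv 2 v x := by
  have hu' : ∀ᶠ y in 𝓝 x, DifferentiableAt 𝕜 u (v y) :=
    hv.continuousAt.tendsto.eventually <|
      (hu.eventually (by simp)).mono fun w hw => hw.differentiableAt two_ne_zero
  have hv' : ∀ᶠ y in 𝓝 x, DifferentiableAt 𝕜 v y :=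
    (hv.eventually (by simp)).mono fun y hy => hy.differentiableAt two_ne_zero
  have hderiv : deriv (u ∘ v) =ᶠ[𝓝 x] fun y => deriv u (v y) * deriv v y := by
    filter_upwards [hu', hv'] with y huy hvy using deriv_comp y huy hvy
  have hdu : DifferentiableAt 𝕜 (deriv u) (v x) :=
    (hu.derivWithin (m := 1) (by norm_num)).differentiableAt one_ne_zero
  have hdv : DifferentiableAt 𝕜 (deriv v) x :=
    (hv.derivWithin (m := 1) (by norm_num)).differentiableAt one_ne_zero
  have hv1 : DifferentiableAt 𝕜 v x := hv.differentiableAt two_ne_zero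
  have hcomp : HasDerivAt (fun y => deriv u (v y)) (iteratedDeriv 2 u (v x) * deriv v x) x := by
    rw [iteratedDeriv_succ, iteratedDeriv_one]
    exact hdu.hasDerivAt.comp x hv1.hasDerivAt
  rw [iteratedDeriv_succ, iteratedDeriv_one, hderiv.deriv_eq,
    (hcomp.fun_mul hdv.hasDerivAt).deriv, iteratedDeriv_succ (f := v), iteratedDeriv_one]
  ring

end IteratedDeriv

section Schwarz

theorem norm_sub_le_norm_one_sub_conj_mul {a w : ℂ} (ha : ‖a‖ ≤ 1) (hw : ‖w‖ ≤ 1) :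
    ‖w - a‖ ≤ ‖1 - conj a * w‖ := by
  have key : normSq (1 - conj a * w) - normSq (w - a) = (1 - normSq a) * (1 - normSq w) := by
    simp only [normSq_apply, sub_re, sub_im, mul_re, mul_im, conj_re, conj_im, one_re, one_im]
    ring
  have ha' : normSq a ≤ 1 := by rw [← Complex.sq_norm]; nlinarith [norm_nonneg a]
  have hw' : normSq w ≤ 1 := by rw [← Complex.sq_norm]; nlinarith [norm_nonneg w]
  rw [← sq_le_sq₀ (norm_nonneg _) (norm_nonneg _), Complex.sq_norm, Complex.sq_norm]
  nlinarith [mul_nonneg (sub_nonneg.mpr ha') (sub_nonneg.mpr hw')]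

theorem norm_deriv_le_one_sub_sq_of_mapsTo_closedBall {h : ℂ → ℂ}
    (hd : DifferentiableOn ℂ h (ball 0 1)) (hmaps : MapsTo h (ball 0 1) (closedBall 0 1)) :
    ‖deriv h 0‖ ≤ 1 - ‖h 0‖ ^ 2 := by
  have h0 : (0 : ℂ) ∈ ball (0 : ℂ) 1 := mem_ball_self one_pos
  have hnorm : ∀ z ∈ ball (0 : ℂ) 1, ‖h z‖ ≤ 1 := fun z hz => mem_closedBall_zero_iff.mp (hmaps hz)
  rcases (hnorm 0 h0).eq_or_lt with ha | ha
  · have hconst := Complex.eqOn_of_isPreconnected_of_isMaxOn_norm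
      (convex_ball (0 : ℂ) 1).isPreconnected isOpen_ball hd h0 fun z hz => (hnorm z hz).trans ha.ge
    have hderiv : deriv h 0 = 0 := by
      rw [(eventuallyEq_of_mem (isOpen_ball.mem_nhds h0) hconst).deriv_eq]
      exact deriv_const _ _
    rw [hderiv, ha]
    norm_num
  · -- compose `h` with the disc automorphism sending `h 0` to `0`, then apply Schwarz
    have hden : ∀ w : ℂ, ‖w‖ ≤ 1 → 1 - conj (h 0) * w ≠ 0 := fun w hw => by
      refine sub_ne_zero.mpr (ne_of_apply_ne norm fun h1 => ?_)
      rw [norm_one, norm_mul, RCLike.norm_conj] at h1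
      nlinarith [norm_nonneg (h 0), norm_nonneg w]
    have hkd : DifferentiableOn ℂ (fun z => (h z - h 0) / (1 - conj (h 0) * h z)) (ball 0 1) :=
      (hd.sub_const _).div ((differentiableOn_const 1).sub (hd.const_mul _))
        fun z hz => hden _ (hnorm z hz)
    have hkmaps : MapsTo (fun z => (h z - h 0) / (1 - conj (h 0) * h z)) (ball 0 1)
        (closedBall ((h 0 - h 0) / (1 - conj (h 0) * h 0)) 1) := fun z hz => by
      rw [sub_self, zero_div, mem_closedBall_zero_iff, norm_div,
        div_le_one (norm_pos_iff.mpr (hden _ (hnorm z hz)))]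
      exact norm_sub_le_norm_one_sub_conj_mul ha.le (hnorm z hz)
    have hh := (hd.differentiableAt (isOpen_ball.mem_nhds h0)).hasDerivAt
    have hk := (hh.sub_const (h 0)).fun_div ((hh.const_mul (conj (h 0))).const_sub 1) (hden _ ha.le)
    have hpos : 0 < 1 - ‖h 0‖ ^ 2 := by nlinarith [norm_nonneg (h 0)]
    have hnorm_den : ‖(1 : ℂ) - (‖h 0‖ : ℂ) ^ 2‖ = 1 - ‖h 0‖ ^ 2 := by
      rw [← ofReal_pow, ← ofReal_one, ← ofReal_sub, norm_real, Real.norm_of_nonneg hpos.le]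
    have hschwarz := Complex.norm_deriv_le_one_of_mapsTo_ball hkd hkmaps one_pos
    rwa [hk.deriv, sub_self, zero_mul, sub_zero, sq, ← div_div,
      mul_div_cancel_right₀ _ (hden _ ha.le), conj_mul', norm_div, hnorm_den,
      div_le_one hpos] at hschwarz

theorem norm_iteratedDeriv_two_div_two_le_of_mapsTo_ball {ω : ℂ → ℂ}
    (hd : DifferentiableOn ℂ ω (ball 0 1)) (h0 : ω 0 = 0)
    (hmaps : MapsTo ω (ball 0 1) (ball 0 1)) :
    ‖iteratedDeriv 2 ω 0 / 2‖ ≤ 1 - ‖deriv ω 0‖ ^ 2 := by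
  have hball : ball (0 : ℂ) 1 ∈ 𝓝 0 := ball_mem_nhds 0 one_pos
  have hkd : DifferentiableOn ℂ (dslope ω 0) (ball 0 1) := (differentiableOn_dslope hball).mpr hd
  have hmaps' : MapsTo ω (ball 0 1) (closedBall (ω 0) 1) := by
    rw [h0]
    exact hmaps.mono_right ball_subset_closedBall
  have hkmaps : MapsTo (dslope ω 0) (ball 0 1) (closedBall 0 1) := fun z hz => by
    simpa using Complex.norm_dslope_le_div_of_mapsTo_ball hd hmaps' hz
  have hω : ω = fun z => z * dslope ω 0 z := funext fun z => by
    simpa [h0] using (sub_smul_dslope ω 0 z).symm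
  have hk : ContDiffAt ℂ 2 (dslope ω 0) 0 :=
    (hkd.analyticOnNhd isOpen_ball 0 (mem_ball_self one_pos)).contDiffAt
  have h2 : iteratedDeriv 2 ω 0 = 2 * deriv (dslope ω 0) 0 := by
    conv_lhs => rw [hω]
    rw [iteratedDeriv_two_fun_mul contDiffAt_fun_id hk]
    simp [iteratedDeriv_fun_id_zero]
  rw [h2, mul_div_cancel_left₀ _ two_ne_zero, ← dslope_same ω 0]
  exact norm_deriv_le_one_sub_sq_of_mapsTo_closedBall hkd hkmaps

end Schwarz

section Coefficients

variable {𝕜 : Type*} [NontriviallyNormedField 𝕜] {f p q : 𝕜 → 𝕜}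

theorem two_mul_deriv_eq_iteratedDeriv_two_of_mul_eq_id_mul_deriv (hf : ContDiffAt 𝕜 3 f 0)
    (hp : ContDiffAt 𝕜 2 p 0) (hf0 : f 0 = 0) (hf1 : deriv f 0 = 1) (hp0 : p 0 = 1)
    (h : ∀ᶠ z in 𝓝 0, p z * f z = z * deriv f z) :
    2 * deriv p 0 = iteratedDeriv 2 f 0 := by
  have hdf : ContDiffAt 𝕜 2 (deriv f) 0 := hf.derivWithin (by norm_num)
  have h2 := Filter.EventuallyEq.iteratedDeriv_eq 2 h
  rw [iteratedDeriv_two_fun_mul hp (hf.of_le (by norm_num)),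
    iteratedDeriv_two_fun_mul contDiffAt_fun_id hdf] at h2
  have hdd : deriv (deriv f) 0 = iteratedDeriv 2 f 0 := by
    rw [iteratedDeriv_succ, iteratedDeriv_one]
  norm_num [hf0, hf1, hp0, hdd, iteratedDeriv_fun_id_zero] at h2
  linear_combination h2

theorem deriv_eq_neg_and_iteratedDeriv_two_add_of_mul_comp_eq_one (hf : ContDiffAt 𝕜 2 f 0)
    (hp : ContDiffAt 𝕜 2 p 0) (hq : ContDiffAt 𝕜 2 q 0) (hf0 : f 0 = 0) (hf1 : deriv f 0 = 1)
    (hp0 : p 0 = 1) (h : ∀ᶠ z in 𝓝 0, p z * q (f z) = 1) :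
    deriv q 0 = -deriv p 0 ∧
      iteratedDeriv 2 p 0 + iteratedDeriv 2 q 0 =
        2 * deriv p 0 ^ 2 + deriv p 0 * iteratedDeriv 2 f 0 := by
  have hq0 : q 0 = 1 := by simpa [hf0, hp0] using h.self_of_nhds
  rw [← hf0] at hq
  have hqf : ContDiffAt 𝕜 2 (fun z => q (f z)) 0 := hq.comp 0 hf
  have hqf_deriv : deriv (fun z => q (f z)) 0 = deriv q (f 0) * deriv f 0 :=
    deriv_comp 0 (hq.differentiableAt two_ne_zero) (hf.differentiableAt two_ne_zero)
  have hqf_deriv2 : iteratedDeriv 2 (fun z => q (f z)) 0 =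
      iteratedDeriv 2 q (f 0) * deriv f 0 ^ 2 + deriv q (f 0) * iteratedDeriv 2 f 0 :=
    iteratedDeriv_two_comp hq hf
  have h1 := Filter.EventuallyEq.deriv_eq h
  have h2 := Filter.EventuallyEq.iteratedDeriv_eq 2 h
  rw [deriv_fun_mul (hp.differentiableAt two_ne_zero) (hqf.differentiableAt two_ne_zero),
    hqf_deriv] at h1
  rw [iteratedDeriv_two_fun_mul hp hqf, hqf_deriv2, hqf_deriv] at h2
  norm_num [hf0, hf1, hp0, hq0, iteratedDeriv_const] at h1 h2
  have hq1 : deriv q 0 = -deriv p 0 := by linear_combination h1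
  refine ⟨hq1, ?_⟩
  rw [hq1] at h2
  linear_combination h2

end Coefficients

section LeftInverse

theorem eventually_ne_zero_of_leftInverse {α β : Type*} [TopologicalSpace α] [Zero α] [Zero β]
    {f : α → β} {F : β → α} (hF0 : F 0 = 0) (hFf : ∀ᶠ z in 𝓝 0, F (f z) = z) :
    ∀ᶠ z in 𝓝 0, z ≠ 0 → f z ≠ 0 :=
  hFf.mono fun z hz hz0 hfz => hz0 (by rw [← hz, hfz, hF0])

variable {f F p q : ℂ → ℂ}

theorem eventually_mul_eq_id_mul_deriv (hf0 : f 0 = 0) (hF0 : F 0 = 0)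
    (hFf : ∀ᶠ z in 𝓝 0, F (f z) = z)
    (hp : ∀ z ∈ ball (0 : ℂ) 1, z ≠ 0 → p z = z * deriv f z / f z) :
    ∀ᶠ z in 𝓝 0, p z * f z = z * deriv f z := by
  filter_upwards [eventually_ne_zero_of_leftInverse hF0 hFf, ball_mem_nhds (0 : ℂ) one_pos]
    with z hfz hz
  rcases eq_or_ne z 0 with rfl | hz0
  · simp [hf0]
  · rw [hp z hz hz0, div_mul_cancel₀ _ (hfz hz0)]

theorem eventually_mul_comp_eq_one (hf : DifferentiableOn ℂ f (ball 0 1))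
    (hF : DifferentiableOn ℂ F (ball 0 1)) (hf0 : f 0 = 0) (hF0 : F 0 = 0)
    (hFf : ∀ᶠ z in 𝓝 0, F (f z) = z) (hp0 : p 0 = 1) (hq0 : q 0 = 1)
    (hp : ∀ z ∈ ball (0 : ℂ) 1, z ≠ 0 → p z = z * deriv f z / f z)
    (hq : ∀ w ∈ ball (0 : ℂ) 1, w ≠ 0 → q w = w * deriv F w / F w) :
    ∀ᶠ z in 𝓝 0, p z * q (f z) = 1 := by
  -- at `w = f z` the quotient `w F'(w) / F(w)` is `f z / (z f'(z))`, because `F'(f z) f'(z) = 1`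
  have hball : ball (0 : ℂ) 1 ∈ 𝓝 0 := ball_mem_nhds 0 one_pos
  have hfball : ∀ᶠ z in 𝓝 0, f z ∈ ball (0 : ℂ) 1 :=
    (hf.differentiableAt hball).continuousAt.preimage_mem_nhds (by rwa [hf0])
  filter_upwards [eventually_eventually_nhds.mpr hFf, eventually_ne_zero_of_leftInverse hF0 hFf,
    hball, hfball, hf.eventually_differentiableAt hball] with z hFfz hfz0 hz hfz hdf
  rcases eq_or_ne z 0 with rfl | hz0
  · rw [hf0, hp0, hq0, one_mul]
  · have hchain : deriv F (f z) * deriv f z = 1 := by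
      rw [← deriv_comp z (hF.differentiableAt (isOpen_ball.mem_nhds hfz)) hdf]
      exact (show F ∘ f =ᶠ[𝓝 z] id from hFfz).deriv_eq.trans (deriv_id z)
    rw [hp z hz hz0, hq (f z) hfz (hfz0 hz0), hFfz.self_of_nhds]
    field_simp [hfz0 hz0]
    linear_combination hchain

end LeftInverse

theorem coeff_relations_of_subordinate {f F φ ω τ : ℂ → ℂ} {B₁ B₂ : ℝ}
    (hf : DifferentiableOn ℂ f (ball 0 1)) (hf0 : f 0 = 0) (hf1 : deriv f 0 = 1)
    (hF : DifferentiableOn ℂ F (ball 0 1)) (hF0 : F 0 = 0) (hFf : ∀ᶠ z in 𝓝 0, F (f z) = z)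
    (hφ : DifferentiableOn ℂ φ (ball 0 1)) (hφ0 : φ 0 = 1) (hφ1 : deriv φ 0 = B₁)
    (hφ2 : iteratedDeriv 2 φ 0 = 2 * B₂)
    (hω : DifferentiableOn ℂ ω (ball 0 1)) (hω0 : ω 0 = 0)
    (hτ : DifferentiableOn ℂ τ (ball 0 1)) (hτ0 : τ 0 = 0)
    (hp : ∀ z ∈ ball (0 : ℂ) 1, z ≠ 0 → φ (ω z) = z * deriv f z / f z)
    (hq : ∀ w ∈ ball (0 : ℂ) 1, w ≠ 0 → φ (τ w) = w * deriv F w / F w) :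
    (B₁ : ℂ) * deriv ω 0 = iteratedDeriv 2 f 0 / 2 ∧
      (B₁ : ℂ) * deriv τ 0 = -(iteratedDeriv 2 f 0 / 2) ∧
      (B₁ : ℂ) * (iteratedDeriv 2 ω 0 / 2 + iteratedDeriv 2 τ 0 / 2) +
        B₂ * (deriv ω 0 ^ 2 + deriv τ 0 ^ 2) = 2 * (iteratedDeriv 2 f 0 / 2) ^ 2 := by
  have hball : ball (0 : ℂ) 1 ∈ 𝓝 0 := ball_mem_nhds 0 one_pos
  have hsmooth : ∀ {u : ℂ → ℂ} {n : WithTop ℕ∞}, DifferentiableOn ℂ u (ball 0 1) →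
      ContDiffAt ℂ n u 0 :=
    fun hu => (hu.analyticAt hball).contDiffAt
  have hcomp : ∀ {σ : ℂ → ℂ}, DifferentiableOn ℂ σ (ball 0 1) → σ 0 = 0 →
      ContDiffAt ℂ 2 (φ ∘ σ) 0 ∧ (φ ∘ σ) 0 = 1 ∧ deriv (φ ∘ σ) 0 = B₁ * deriv σ 0 ∧
        iteratedDeriv 2 (φ ∘ σ) 0 = 2 * B₂ * deriv σ 0 ^ 2 + B₁ * iteratedDeriv 2 σ 0 := by
    intro σ hσ hσ0
    have hφσ : ContDiffAt ℂ 2 φ (σ 0) := by rw [hσ0]; exact hsmooth hφ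
    refine ⟨hφσ.comp 0 (hsmooth hσ), by simp [hσ0, hφ0], ?_, ?_⟩
    · rw [deriv_comp 0 (hφσ.differentiableAt two_ne_zero) ((hsmooth hσ).differentiableAt
        one_ne_zero), hσ0, hφ1]
    · rw [iteratedDeriv_two_comp hφσ (hsmooth hσ), hσ0, hφ1, hφ2]
  obtain ⟨hpC, hp0, hp1, hp2⟩ := hcomp hω hω0
  obtain ⟨hqC, hq0, hq1, hq2⟩ := hcomp hτ hτ0
  have hpf := two_mul_deriv_eq_iteratedDeriv_two_of_mul_eq_id_mul_deriv (hsmooth hf) hpC hf0 hf1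
    hp0 (eventually_mul_eq_id_mul_deriv hf0 hF0 hFf hp)
  obtain ⟨hqp, hpq⟩ := deriv_eq_neg_and_iteratedDeriv_two_add_of_mul_comp_eq_one (hsmooth hf)
    hpC hqC hf0 hf1 hp0 (eventually_mul_comp_eq_one hf hF hf0 hF0 hFf hp0 hq0 hp hq)
  rw [hp1] at hpf hqp hpq
  rw [hq1] at hqp
  rw [hp2, hq2] at hpq
  refine ⟨by linear_combination hpf / 2, by linear_combination hqp - hpf / 2, ?_⟩
  linear_combination hpq / 2 + (B₁ * deriv ω 0 / 2 + iteratedDeriv 2 f 0 / 2) * hpf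

theorem norm_le_sqrt_of_coeff_relations {B₁ B₂ : ℝ} {a c d c₂ d₂ : ℂ} (hB₁ : 0 < B₁)
    (hc : (B₁ : ℂ) * c = a) (hd : (B₁ : ℂ) * d = -a)
    (hsum : (B₁ : ℂ) * (c₂ + d₂) + B₂ * (c ^ 2 + d ^ 2) = 2 * a ^ 2)
    (hc₂ : ‖c₂‖ ≤ 1 - ‖c‖ ^ 2) (hd₂ : ‖d₂‖ ≤ 1 - ‖d‖ ^ 2) :
    ‖a‖ ≤ √((B₁ ^ 2 + B₁ + |B₂ - B₁|) / 2) := by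
  have hdc : d = -c := mul_left_cancel₀ (ofReal_ne_zero.mpr hB₁.ne') (by rw [hd, ← hc, mul_neg])
  subst hdc
  rw [norm_neg] at hd₂
  have ha : ‖a‖ = B₁ * ‖c‖ := by rw [← hc, norm_mul, norm_real, Real.norm_of_nonneg hB₁.le]
  have hsq : 2 * ‖a‖ ^ 2 ≤ 2 * (B₁ * (1 - ‖c‖ ^ 2) + |B₂| * ‖c‖ ^ 2) :=
    calc 2 * ‖a‖ ^ 2 = ‖(B₁ : ℂ) * (c₂ + d₂) + B₂ * (2 * c ^ 2)‖ := by
          rw [show (B₂ : ℂ) * (2 * c ^ 2) = B₂ * (c ^ 2 + (-c) ^ 2) by ring, hsum, norm_mul,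
            norm_pow, Complex.norm_two]
      _ ≤ B₁ * (‖c₂‖ + ‖d₂‖) + |B₂| * (2 * ‖c‖ ^ 2) := by
          refine (norm_add_le _ _).trans (add_le_add ?_ ?_)
          · rw [norm_mul, norm_real, Real.norm_of_nonneg hB₁.le]
            exact mul_le_mul_of_nonneg_left (norm_add_le _ _) hB₁.le
          · rw [norm_mul, norm_real, Real.norm_eq_abs, norm_mul, norm_pow, Complex.norm_two]
      _ ≤ 2 * (B₁ * (1 - ‖c‖ ^ 2) + |B₂| * ‖c‖ ^ 2) := by nlinarith
  have hc1 : ‖c‖ ^ 2 ≤ 1 := by linarith [norm_nonneg c₂]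
  have hB₂ : |B₂| ≤ B₁ + |B₂ - B₁| := by
    have := abs_sub_abs_le_abs_sub B₂ B₁
    rw [abs_of_pos hB₁] at this
    linarith
  rw [← abs_norm]
  refine Real.abs_le_sqrt ?_
  have ha2 : ‖a‖ ^ 2 = B₁ ^ 2 * ‖c‖ ^ 2 := by rw [ha]; ring
  nlinarith [mul_le_mul_of_nonneg_left hc1 (sq_nonneg B₁),
    mul_le_mul_of_nonneg_right hB₂ (sq_nonneg ‖c‖),
    mul_le_of_le_one_right (abs_nonneg (B₂ - B₁)) hc1]

theorem stmt3_general
    (f F : ℂ → ℂ)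
    (hf : DifferentiableOn ℂ f (ball 0 1)) (hf0 : f 0 = 0) (hf1 : deriv f 0 = 1)
    (hF : DifferentiableOn ℂ F (ball 0 1)) (hF0 : F 0 = 0)
    (hFf : ∀ᶠ z in nhds (0 : ℂ), F (f z) = z)
    (φ : ℂ → ℂ) (B₁ B₂ : ℝ)
    (hφ : DifferentiableOn ℂ φ (ball 0 1)) (hφ0 : φ 0 = 1)
    (hB₁ : 0 < B₁) (hφ1 : deriv φ 0 = (B₁ : ℂ)) (hφ2 : iteratedDeriv 2 φ 0 = 2 * (B₂ : ℂ))
    (g : ℂ → ℂ)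
    (hgf : ∀ z ∈ ball (0 : ℂ) 1, z ≠ 0 → g z = z * deriv f z / f z)
    (hgsub : Subordinate g φ)
    (G : ℂ → ℂ)
    (hGF : ∀ w ∈ ball (0 : ℂ) 1, w ≠ 0 → G w = w * deriv F w / F w)
    (hGsub : Subordinate G φ) :
    ‖iteratedDeriv 2 f 0 / 2‖ ≤ Real.sqrt ((B₁ ^ 2 + B₁ + |B₂ - B₁|) / 2) := by
  obtain ⟨ω, hω, hω0, hωm, hgω⟩ := hgsub
  obtain ⟨τ, hτ, hτ0, hτm, hGτ⟩ := hGsub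
  obtain ⟨hc, hd, hsum⟩ := coeff_relations_of_subordinate hf hf0 hf1 hF hF0 hFf hφ hφ0 hφ1 hφ2
    hω hω0 hτ hτ0 (fun z hz hz0 => (hgω z hz).symm.trans (hgf z hz hz0))
    (fun w hw hw0 => (hGτ w hw).symm.trans (hGF w hw hw0))
  exact norm_le_sqrt_of_coeff_relations hB₁ hc hd hsum
    (norm_iteratedDeriv_two_div_two_le_of_mapsTo_ball hω hω0 hωm)
    (norm_iteratedDeriv_two_div_two_le_of_mapsTo_ball hτ hτ0 hτm)

theorem stmt3
    (f F : ℂ → ℂ)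
    (hf : DifferentiableOn ℂ f (ball 0 1)) (hf0 : f 0 = 0) (hf1 : deriv f 0 = 1)
    (hfi : InjOn f (ball 0 1))
    (hF : DifferentiableOn ℂ F (ball 0 1)) (hF0 : F 0 = 0) (hFi : InjOn F (ball 0 1))
    (hFf : ∀ᶠ z in nhds (0 : ℂ), F (f z) = z)
    (φ : ℂ → ℂ) (B₁ B₂ : ℝ)
    (hφ : DifferentiableOn ℂ φ (ball 0 1)) (hφ0 : φ 0 = 1)
    (hB₁ : 0 < B₁) (hφ1 : deriv φ 0 = (B₁ : ℂ)) (hφ2 : iteratedDeriv 2 φ 0 = 2 * (B₂ : ℂ))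
    (g : ℂ → ℂ) (hg0 : g 0 = 1)
    (hgf : ∀ z ∈ ball (0 : ℂ) 1, z ≠ 0 → g z = z * deriv f z / f z)
    (hgsub : Subordinate g φ)
    (G : ℂ → ℂ) (hG0 : G 0 = 1)
    (hGF : ∀ w ∈ ball (0 : ℂ) 1, w ≠ 0 → G w = w * deriv F w / F w)
    (hGsub : Subordinate G φ) :
    ‖iteratedDeriv 2 f 0 / 2‖ ≤ Real.sqrt ((B₁ ^ 2 + B₁ + |B₂ - B₁|) / 2) :=
  stmt3_general f F hf hf0 hf1 hF hF0 hFf φ B₁ B₂ hφ hφ0 hB₁ hφ1 hφ2 g hgf hgsub G hGF hGsub
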